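/- The Droop-quota analog of utility rounding fails for n = 3, k = 1: with candidate types {1,2}, {1,3}, {2,3} each of supply 1, the integer utility vector (1,1,1) is achievable by a fractional committee of total size strictly less than k+1 = 2 (take x_R = 1/2 for each type, total size 3/2), but no integral committee of size at most k = 1 gives every voter utility at least 1. -/

import Mathlib

/-- Approvers of the three candidate types in the Droop-quota example:
type 0 is `{1,2}`, type 1 is `{1,3}`, type 2 is `{2,3}` (0-indexed). -/
def droopApp : Fin 3 → Finset (Fin 3) := ![{0, 1}, {0, 2}, {1, 2}]

/-!
Every type is approved by two voters and every voter approves two types, so the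
configuration is regular of degree 2. Giving each type weight `1/2` gives every voter
utility exactly `1` at total size `3/2 < 2`. Conversely, double counting the voter-type
incidences shows that total utility is twice the committee size, so a committee
giving each of the three voters utility `1` has size at least `3/2`; an integral one
therefore has size at least `2`.
-/

lemma card_droopApp (R : Fin 3) : (droopApp R).card = 2 := by
  fin_cases R <;> decide

lemma card_filter_mem_droopApp (i : Fin 3) :
    (Finset.univ.filter fun R => i ∈ droopApp R).card = 2 := by
  fin_cases i <;> decide

lemma sum_ite_mem_droopApp_const {M : Type*} [AddCommMonoid M] (i : Fin 3) (c : M) :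
    ∑ R, (if i ∈ droopApp R then c else 0) = 2 • c := by
  rw [Finset.sum_ite, Finset.sum_const_zero, add_zero, Finset.sum_const,
    card_filter_mem_droopApp]

lemma sum_utility_droopApp {M : Type*} [AddCommMonoid M] (x : Fin 3 → M) :
    ∑ i, ∑ R, (if i ∈ droopApp R then x R else 0) = 2 • ∑ R, x R := by
  rw [Finset.sum_comm, Finset.smul_sum]
  refine Finset.sum_congr rfl fun R _ => ?_
  rw [Finset.sum_ite_mem, Finset.univ_inter, Finset.sum_const, card_droopApp]

/-- The Droop-quota analog of utility rounding fails for `n = 3`, `k = 1`: the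
utility vector `(1,1,1)` is achievable by a fractional committee of total size
strictly less than `k + 1 = 2` (with each `x_R ≤ 1`), but no integral committee
of size at most `k = 1` gives every voter utility at least 1. -/
theorem stmt19 :
    (∃ x : Fin 3 → ℝ, (∀ R, 0 ≤ x R ∧ x R ≤ 1) ∧
      (∑ R, x R) < 2 ∧
      (∀ i : Fin 3, (1 : ℝ) ≤ ∑ R, if i ∈ droopApp R then x R else 0)) ∧
    ¬ ∃ x : Fin 3 → ℕ, (∀ R, x R ≤ 1) ∧ (∑ R, x R) ≤ 1 ∧
        (∀ i : Fin 3, (1 : ℤ) ≤ ∑ R, if i ∈ droopApp R then (x R : ℤ) else 0) := by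
  refine ⟨⟨fun _ => 1 / 2, fun _ => by norm_num, ?_, fun i => ?_⟩, ?_⟩
  · norm_num
  · rw [sum_ite_mem_droopApp_const]
    norm_num
  · rintro ⟨x, -, hsize, hcover⟩
    have htotal : (3 : ℤ) ≤ 2 * ∑ R, (x R : ℤ) := by
      simpa [nsmul_eq_mul] using (Finset.sum_le_sum fun i _ => hcover i).trans_eq (sum_utility_droopApp _)
    have hsize' : (∑ R, (x R : ℤ)) ≤ 1 := by exact_mod_cast hsize
    omega
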